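/- arXiv:1405.5329 — 8 statements merged into one kernel-verified Lean document; each statement's English description precedes it below -/
import Mathlib

section
/- Let f_s > 0 and let F ⊆ ℝ be a bounded measurable set that is aliasing-free with respect to f_s. Then the Lebesgue measure of F is at most f_s. -/
/-!
`Ioc 0 fs` is a fundamental domain for the translation action of `fs ℤ` on `ℝ`. Aliasing-freeness
says exactly that the translates `n fs + F` are pairwise a.e. disjoint, so folding `F` into the
fundamental domain loses no measure, and `vol F ≤ vol (Ioc 0 fs) = fs`.
-/

open MeasureTheory Set Function Pointwise

theorem pairwise_aedisjoint_vadd_of_measure_inter_vadd_eq_zero {G α : Type*} [AddGroup G]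
    [AddAction G α] [MeasurableSpace α] {μ : Measure α} [VAddInvariantMeasure G α μ] {t : Set α}
    (ht : ∀ g : G, g ≠ 0 → μ (t ∩ (g +ᵥ t)) = 0) :
    Pairwise (AEDisjoint μ on fun g : G => g +ᵥ t) := by
  intro g₁ g₂ hne
  have := ht (-g₁ + g₂) (neg_add_eq_zero.not.mpr hne)
  rwa [add_vadd, measure_inter_neg_vadd] at this

theorem volume_le_of_measure_inter_zsmul_vadd_eq_zero {T : ℝ} (hT : 0 < T) {F : Set ℝ}
    (hF : NullMeasurableSet F) (hFT : ∀ n : ℤ, n ≠ 0 → volume (F ∩ ((n • T) +ᵥ F)) = 0) :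
    volume F ≤ ENNReal.ofReal T := by
  have hdisj : Pairwise (AEDisjoint volume on fun g : AddSubgroup.zmultiples T => g +ᵥ F) := by
    refine pairwise_aedisjoint_vadd_of_measure_inter_vadd_eq_zero ?_
    rintro ⟨_, n, rfl⟩ hg
    exact hFT n (by rintro rfl; simp at hg)
  calc volume F ≤ volume (Ioc 0 (0 + T)) :=
        (isAddFundamentalDomain_Ioc hT 0).measure_le_of_pairwise_disjoint hF
          fun _ _ hne => (hdisj hne).mono inter_subset_left inter_subset_left
    _ = ENNReal.ofReal T := by simp

theorem bounded_aliasing_free_measure_le_general (fs : ℝ) (hfs : 0 < fs)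
    (F : Set ℝ) (hF : MeasurableSet F)
    (haf : ∀ n : ℤ, n ≠ 0 → volume (F ∩ ((fun x => x + (n : ℝ) * fs) '' F)) = 0) :
    volume F ≤ ENNReal.ofReal fs := by
  refine volume_le_of_measure_inter_zsmul_vadd_eq_zero hfs hF.nullMeasurableSet fun n hn => ?_
  simpa [← Set.image_vadd, add_comm] using haf n hn

/-- **Proposition 2.** A bounded measurable set that is aliasing-free with respect to
sampling frequency `fs` has Lebesgue measure at most `fs`. -/
theorem bounded_aliasing_free_measure_le (fs : ℝ) (hfs : 0 < fs)
    (F : Set ℝ) (hF : MeasurableSet F) (hFb : Bornology.IsBounded F)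
    (haf : ∀ n : ℤ, n ≠ 0 → volume (F ∩ ((fun x => x + (n : ℝ) * fs) '' F)) = 0) :
    volume F ≤ ENNReal.ofReal fs :=
  bounded_aliasing_free_measure_le_general fs hfs F hF haf
end

section
/- Let f_s > 0, let F ⊆ ℝ be a measurable set that is aliasing-free with respect to f_s, and let S : ℝ → [0, ∞] be measurable. Then ∫_F S(f) df ≤ ∫_{(−f_s/2, f_s/2]} sup_{k∈ℤ} S(f − f_s·k) df, where the integrals are Lebesgue integrals with values in [0, ∞]. -/
/-!
Cutting `F` along the translates of the period `(-fs/2, fs/2]` and moving every piece back into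
the period writes `∫_F S` as a sum of integrals over subsets of the period, on each of which the
integrand is one alias `S (f - fs * k)`. Aliasing-freeness says exactly that these subsets are
almost disjoint, so the sum is at most the integral of the supremum of the aliases over the period.
-/

open MeasureTheory Set
open scoped ENNReal Pointwise

namespace MeasureTheory.IsAddFundamentalDomain

variable {G α : Type*} [AddGroup G] [Countable G] [AddAction G α] [MeasurableSpace α]
  [MeasurableConstVAdd G α] {μ : Measure α} [VAddInvariantMeasure G α μ] {s t : Set α}

theorem setLIntegral_le_setLIntegral_iSup_vadd (hs : IsAddFundamentalDomain G s μ)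
    (ht : NullMeasurableSet t μ) (ht_disj : ∀ g : G, g ≠ 0 → AEDisjoint μ (g +ᵥ t) t)
    (f : α → ℝ≥0∞) :
    ∫⁻ x in t, f x ∂μ ≤ ∫⁻ x in s, ⨆ g : G, f (g +ᵥ x) ∂μ := by
  have hdisj := Measure.pairwise_aedisjoint_of_aedisjoint_forall_ne_zero ht_disj
    fun g => (measurePreserving_vadd g μ).quasiMeasurePreserving
  calc ∫⁻ x in t, f x ∂μ = ∑' g : G, ∫⁻ x in (g +ᵥ t) ∩ s, f (-g +ᵥ x) ∂μ :=
        hs.setLIntegral_eq_tsum' f t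
    _ ≤ ∑' g : G, ∫⁻ x in (g +ᵥ t) ∩ s, ⨆ h : G, f (h +ᵥ x) ∂μ :=
        ENNReal.tsum_le_tsum fun g => lintegral_mono fun x => le_iSup (fun h => f (h +ᵥ x)) (-g)
    _ = ∫⁻ x in ⋃ g : G, (g +ᵥ t) ∩ s, ⨆ h : G, f (h +ᵥ x) ∂μ :=
        (lintegral_iUnion₀ (fun g => (ht.vadd g).inter hs.nullMeasurableSet)
          (fun g h hgh => (hdisj hgh).mono inter_subset_left inter_subset_left) _).symm
    _ ≤ ∫⁻ x in s, ⨆ g : G, f (g +ᵥ x) ∂μ :=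
        lintegral_mono_set (iUnion_subset fun _ => inter_subset_right)

end MeasureTheory.IsAddFundamentalDomain

def AliasingFree (fs : ℝ) (F : Set ℝ) : Prop :=
  ∀ n : ℤ, n ≠ 0 → volume (F ∩ ((fun x => x + (n : ℝ) * fs) '' F)) = 0

theorem AliasingFree.aedisjoint_vadd {fs : ℝ} {F : Set ℝ} (hF : AliasingFree fs F)
    {g : AddSubgroup.zmultiples fs} (hg : g ≠ 0) : AEDisjoint volume (g +ᵥ F) F := by
  obtain ⟨_, n, rfl⟩ := g
  have hn : n ≠ 0 := by rintro rfl; simp at hg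
  rw [AEDisjoint, inter_comm, ← image_vadd]
  convert hF n hn using 4 with x
  simp [add_comm, zsmul_eq_mul]

theorem iSup_zmultiples_vadd_le_iSup_sub_mul (fs : ℝ) (S : ℝ → ℝ≥0∞) (x : ℝ) :
    ⨆ g : AddSubgroup.zmultiples fs, S (g +ᵥ x) ≤ ⨆ k : ℤ, S (x - fs * k) :=
  iSup_le fun ⟨_, n, rfl⟩ => le_iSup_of_le (-n) (by simp [zsmul_eq_mul, sub_eq_neg_add, mul_comm])

theorem lintegral_aliasing_free_le_lintegral_sup_general (fs : ℝ) (hfs : 0 < fs)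
    (F : Set ℝ) (hF : MeasurableSet F)
    (haf : ∀ n : ℤ, n ≠ 0 → volume (F ∩ ((fun x => x + (n : ℝ) * fs) '' F)) = 0)
    (S : ℝ → ℝ≥0∞) :
    ∫⁻ f in F, S f ∂volume
      ≤ ∫⁻ f in Set.Ioc (-(fs / 2)) (fs / 2), ⨆ k : ℤ, S (f - fs * k) ∂volume := by
  have hperiod : Ioc (-(fs / 2)) (fs / 2) = Ioc (-(fs / 2)) (-(fs / 2) + fs) := by ring_nf
  calc ∫⁻ f in F, S f
      ≤ ∫⁻ x in Ioc (-(fs / 2)) (fs / 2), ⨆ g : AddSubgroup.zmultiples fs, S (g +ᵥ x) := by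
        rw [hperiod]
        exact (isAddFundamentalDomain_Ioc hfs _).setLIntegral_le_setLIntegral_iSup_vadd
          hF.nullMeasurableSet (fun _ hg => AliasingFree.aedisjoint_vadd haf hg) S
    _ ≤ ∫⁻ x in Ioc (-(fs / 2)) (fs / 2), ⨆ k : ℤ, S (x - fs * k) :=
        lintegral_mono fun x => iSup_zmultiples_vadd_le_iSup_sub_mul fs S x

/-- Upper-bound direction of equation (16) in Theorem 2: the integral of a nonnegative
spectral density `S` over an aliasing-free set is at most the integral over one period
of the supremum over all aliases. -/
theorem lintegral_aliasing_free_le_lintegral_sup (fs : ℝ) (hfs : 0 < fs)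
    (F : Set ℝ) (hF : MeasurableSet F)
    (haf : ∀ n : ℤ, n ≠ 0 → volume (F ∩ ((fun x => x + (n : ℝ) * fs) '' F)) = 0)
    (S : ℝ → ℝ≥0∞) (hS : Measurable S) :
    ∫⁻ f in F, S f ∂volume
      ≤ ∫⁻ f in Set.Ioc (-(fs / 2)) (fs / 2), ⨆ k : ℤ, S (f - fs * k) ∂volume :=
  lintegral_aliasing_free_le_lintegral_sup_general fs hfs F hF haf S
end

section
/- Let f_s > 0 and let S : ℝ → [0, ∞] be measurable. Then the supremum, over all bounded measurable sets F ⊆ ℝ that are aliasing-free with respect to f_s, of ∫_F S(f) df equals ∫_{(−f_s/2, f_s/2]} sup_{k∈ℤ} S(f − f_s·k) df. -/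
open MeasureTheory Set
open scoped ENNReal

/-!
Tiling `ℝ` by the translates `I + n p` of the period `I = (a, a + p]` gives
`∫_F S = ∫_I ∑ₙ 1_F(x + n p) S(x + n p) dx`. If `F` is aliasing-free, for almost every `x` at most
one term of the sum is nonzero, so it is bounded by `supₙ S(x + n p)`. Conversely, for a finite
window `T` of shifts choose measurably, for each `x ∈ I`, a shift `κ x ∈ T` at which `S(x + n p)`
is largest; the set `{x + κ x p : x ∈ I}` is bounded, aliasing-free and its integral is
`∫_I maxₙ∈T S(x + n p)`, which tends to the right-hand side by monotone convergence.
-/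

theorem eq_of_add_intCast_mul_eq_of_mem_Ioc {p a x y : ℝ} (hp : 0 < p) {m n : ℤ}
    (hx : x ∈ Ioc a (a + p)) (hy : y ∈ Ioc a (a + p)) (h : x + m * p = y + n * p) : m = n := by
  have hm : toIocDiv hp a (x + m * p) = m :=
    toIocDiv_eq_of_sub_zsmul_mem_Ioc hp (by rwa [zsmul_eq_mul, add_sub_cancel_right])
  have hn : toIocDiv hp a (x + m * p) = n :=
    toIocDiv_eq_of_sub_zsmul_mem_Ioc hp (by rwa [h, zsmul_eq_mul, add_sub_cancel_right])
  rw [← hm, hn]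

theorem ENNReal.tsum_eq_iSup_of_support_subsingleton {ι : Type*} {f : ι → ℝ≥0∞}
    (hf : (Function.support f).Subsingleton) : ∑' i, f i = ⨆ i, f i := by
  refine le_antisymm ?_ (iSup_le ENNReal.le_tsum)
  rcases hf.eq_empty_or_singleton with h | ⟨i, h⟩
  · simp [Function.support_eq_empty_iff.1 h]
  · rw [tsum_eq_single i fun j hj => Function.notMem_support.1 (by rwa [h])]
    exact le_iSup f i

theorem Finset.exists_measurable_argmax {α ι β : Type*} [MeasurableSpace α] [MeasurableSpace ι]
    [CompleteLinearOrder β] [TopologicalSpace β] [OrderTopology β] [SecondCountableTopology β]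
    [MeasurableSpace β] [BorelSpace β] {g : ι → α → β} (hg : ∀ i, Measurable (g i))
    {T : Finset ι} (hT : T.Nonempty) :
    ∃ κ : α → ι, Measurable κ ∧ (∀ x, κ x ∈ T) ∧ ∀ x, g (κ x) x = ⨆ i ∈ T, g i x := by
  classical
  induction hT using Finset.Nonempty.cons_induction with
  | singleton i => exact ⟨fun _ => i, measurable_const, by simp, by simp⟩
  | cons i T hi hT ih =>
    obtain ⟨κ, hκ, hκT, hκg⟩ := ih
    set A := {x | ⨆ j ∈ T, g j x ≤ g i x}
    have hA : MeasurableSet A :=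
      measurableSet_le (.biSup _ T.countable_toSet fun j _ => hg j) (hg i)
    refine ⟨A.piecewise (fun _ => i) κ, measurable_const.piecewise hA hκ, fun x => ?_, fun x => ?_⟩
    · by_cases hx : x ∈ A <;> simp [hx, hκT]
    · rw [Finset.cons_eq_insert, Finset.iSup_insert]
      by_cases hx : x ∈ A
      · rw [A.piecewise_eq_of_mem _ _ hx, left_eq_sup]; exact hx
      · rw [A.piecewise_eq_of_notMem _ _ hx, hκg, right_eq_sup]; exact (not_le.1 hx).le

theorem lintegral_eq_setLIntegral_Ioc_tsum {p : ℝ} (hp : 0 < p) (a : ℝ) {f : ℝ → ℝ≥0∞}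
    (hf : Measurable f) : ∫⁻ x, f x = ∫⁻ x in Ioc a (a + p), ∑' n : ℤ, f (x + n * p) := by
  rw [lintegral_tsum (f := fun (n : ℤ) x => f (x + n * p))
      fun n => (hf.comp (measurable_add_const _)).aemeasurable,
    ← setLIntegral_univ, ← iUnion_Ioc_add_zsmul hp a,
    lintegral_iUnion (fun _ => measurableSet_Ioc) (pairwise_disjoint_Ioc_add_zsmul a p)]
  refine tsum_congr fun n => ?_
  rw [← (measurePreserving_add_right volume (n * p)).setLIntegral_comp_preimage_emb
    (measurableEmbedding_addRight _)]
  congr 2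
  ext x
  simp only [mem_preimage, mem_Ioc, zsmul_eq_mul]
  push_cast
  constructor <;> rintro ⟨h₁, h₂⟩ <;> constructor <;> linarith

def IsAliasingFree (p : ℝ) (F : Set ℝ) : Prop :=
  ∀ n : ℤ, n ≠ 0 → volume (F ∩ ((fun x => x + (n : ℝ) * p) '' F)) = 0

namespace IsAliasingFree

variable {p : ℝ} {F : Set ℝ}

theorem ae_subsingleton (hF : IsAliasingFree p F) :
    ∀ᵐ x, {n : ℤ | x + n * p ∈ F}.Subsingleton := by
  have hpair : ∀ m n : ℤ, ∀ᵐ x, x + m * p ∈ F → x + n * p ∈ F → m = n := by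
    intro m n
    by_cases hmn : m = n
    · exact .of_forall fun _ _ _ => hmn
    refine measure_mono_null (t := (· + m * p) ⁻¹' (F ∩ (· + (m - n : ℤ) * p) '' F)) ?_ ?_
    · intro x hx
      obtain ⟨hm, hn, -⟩ : x + m * p ∈ F ∧ x + n * p ∈ F ∧ m ≠ n := by simpa using hx
      exact ⟨hm, x + n * p, hn, by push_cast; ring⟩
    · rw [measure_preimage_add_right]
      exact hF _ (sub_ne_zero.2 hmn)
  filter_upwards [ae_all_iff.2 fun m => ae_all_iff.2 (hpair m)] with x hx m hm n hn
  exact hx m n hm hn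

theorem ae_tsum_indicator_le (hF : IsAliasingFree p F) (f : ℝ → ℝ≥0∞) :
    ∀ᵐ x, ∑' n : ℤ, F.indicator f (x + n * p) ≤ ⨆ n : ℤ, f (x + n * p) := by
  filter_upwards [hF.ae_subsingleton] with x hx
  have hsupp : (Function.support fun n : ℤ => F.indicator f (x + n * p)) ⊆
      {n : ℤ | x + n * p ∈ F} := fun n hn => by
    by_contra h
    exact hn (indicator_of_notMem (s := F) h f)
  rw [ENNReal.tsum_eq_iSup_of_support_subsingleton (hx.anti hsupp)]
  exact iSup_mono fun n => indicator_le_self F f _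

theorem setLIntegral_le (hF : IsAliasingFree p F) (hp : 0 < p) (a : ℝ) (hFm : MeasurableSet F)
    {f : ℝ → ℝ≥0∞} (hf : Measurable f) :
    ∫⁻ x in F, f x ≤ ∫⁻ x in Ioc a (a + p), ⨆ n : ℤ, f (x + n * p) := by
  rw [← lintegral_indicator hFm, lintegral_eq_setLIntegral_Ioc_tsum hp a (hf.indicator hFm)]
  exact lintegral_mono_ae (ae_restrict_of_ae (hF.ae_tsum_indicator_le f))

end IsAliasingFree

def shiftedPeriod (p a : ℝ) (κ : ℝ → ℤ) : Set ℝ :=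
  (fun x => x + κ x * p) '' Ioc a (a + p)

section ShiftedPeriod

variable {p a : ℝ} {κ : ℝ → ℤ}

theorem add_mul_mem_shiftedPeriod_iff (hp : 0 < p) {x : ℝ} (hx : x ∈ Ioc a (a + p)) {n : ℤ} :
    x + n * p ∈ shiftedPeriod p a κ ↔ n = κ x := by
  constructor
  · rintro ⟨y, hy, hxy : y + κ y * p = x + n * p⟩
    have hκ : κ y = n := eq_of_add_intCast_mul_eq_of_mem_Ioc hp hy hx hxy
    obtain rfl : y = x := by rw [hκ] at hxy; exact add_right_cancel hxy
    exact hκ.symm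
  · rintro rfl
    exact mem_image_of_mem _ hx

theorem isAliasingFree_shiftedPeriod (hp : 0 < p) (a : ℝ) (κ : ℝ → ℤ) :
    IsAliasingFree p (shiftedPeriod p a κ) := by
  intro m hm
  refine measure_mono_null (fun z ⟨hz, w, ⟨y, hy, hyw⟩, hwz⟩ => hm ?_) measure_empty
  have : y + (κ y + m : ℤ) * p ∈ shiftedPeriod p a κ := by
    rw [← hwz, ← hyw] at hz
    push_cast
    convert hz using 1
    ring
  simpa using (add_mul_mem_shiftedPeriod_iff hp hy).1 this

theorem measurableSet_shiftedPeriod (p a : ℝ) (hκ : Measurable κ) :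
    MeasurableSet (shiftedPeriod p a κ) := by
  have : shiftedPeriod p a κ =
      ⋃ n : ℤ, {z | z - n * p ∈ Ioc a (a + p) ∧ κ (z - n * p) = n} := by
    ext z
    simp only [mem_iUnion, mem_ofPred_eq]
    constructor
    · rintro ⟨y, hy, rfl⟩
      exact ⟨κ y, by simpa using hy, by simp⟩
    · rintro ⟨n, hz, hκz⟩
      exact ⟨z - n * p, hz, show z - n * p + κ (z - n * p) * p = z by rw [hκz, sub_add_cancel]⟩
  rw [this]
  exact .iUnion fun n => (measurableSet_Ioc.preimage (measurable_sub_const _)).inter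
    ((measurableSet_singleton n).preimage (hκ.comp (measurable_sub_const _)))

theorem isBounded_shiftedPeriod (p a : ℝ) {T : Finset ℤ} (hκT : ∀ x, κ x ∈ T) :
    Bornology.IsBounded (shiftedPeriod p a κ) := by
  refine ((Bornology.isBounded_biUnion_finset T).2 fun n _ =>
    Metric.isBounded_Ioc (a + n * p) (a + p + n * p)).subset ?_
  rintro _ ⟨y, hy, rfl⟩
  exact mem_biUnion (hκT y) ⟨by linarith [hy.1], by linarith [hy.2]⟩

theorem setLIntegral_shiftedPeriod (hp : 0 < p) (hκ : Measurable κ) {f : ℝ → ℝ≥0∞}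
    (hf : Measurable f) :
    ∫⁻ z in shiftedPeriod p a κ, f z =
      ∫⁻ x in Ioc a (a + p), f (x + κ x * p) := by
  rw [← lintegral_indicator (measurableSet_shiftedPeriod p a hκ),
    lintegral_eq_setLIntegral_Ioc_tsum hp a (hf.indicator (measurableSet_shiftedPeriod p a hκ))]
  refine setLIntegral_congr_fun measurableSet_Ioc fun x hx => ?_
  rw [tsum_eq_single (κ x) fun n hn =>
      indicator_of_notMem (mt (add_mul_mem_shiftedPeriod_iff hp hx).1 hn) f,
    indicator_of_mem ((add_mul_mem_shiftedPeriod_iff hp hx).2 rfl)]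

end ShiftedPeriod

theorem setLIntegral_Ioc_iSup_le_iSup_isAliasingFree {p : ℝ} (hp : 0 < p) (a : ℝ)
    {f : ℝ → ℝ≥0∞} (hf : Measurable f) :
    ∫⁻ x in Ioc a (a + p), ⨆ n : ℤ, f (x + n * p) ≤
      ⨆ (F : Set ℝ) (_ : MeasurableSet F) (_ : Bornology.IsBounded F) (_ : IsAliasingFree p F),
        ∫⁻ z in F, f z := by
  have hg : ∀ n : ℤ, Measurable fun x => f (x + n * p) :=
    fun n => hf.comp (measurable_add_const _)
  have hmct : ∫⁻ x in Ioc a (a + p), ⨆ n : ℤ, f (x + n * p) =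
      ⨆ T : Finset ℤ, ∫⁻ x in Ioc a (a + p), ⨆ n ∈ T, f (x + n * p) := by
    rw [← lintegral_iSup_directed_of_measurable
      (f := fun (T : Finset ℤ) x => ⨆ n ∈ T, f (x + n * p))
      (fun T => .iSup fun n => .iSup fun _ => hg n)
      (Monotone.directed_le fun T T' h x => biSup_mono fun n hn => Finset.mem_of_subset h hn)]
    simp_rw [← iSup_eq_iSup_finset]
  refine hmct ▸ iSup_le fun T => ?_
  rcases T.eq_empty_or_nonempty with rfl | hT
  · simp
  obtain ⟨κ, hκ, hκT, hκf⟩ := T.exists_measurable_argmax hg hT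
  calc ∫⁻ x in Ioc a (a + p), ⨆ n ∈ T, f (x + n * p)
      = ∫⁻ z in shiftedPeriod p a κ, f z := by
        simp only [← hκf, setLIntegral_shiftedPeriod hp hκ hf]
    _ ≤ _ := le_iSup_of_le (shiftedPeriod p a κ) <|
        le_iSup_of_le (measurableSet_shiftedPeriod p a hκ) <|
        le_iSup_of_le (isBounded_shiftedPeriod p a hκT) <|
        le_iSup (fun _ => _) (isAliasingFree_shiftedPeriod hp a κ)

/-- Equation (16) together with Remark (i) after Theorem 2: the supremum over all bounded
measurable aliasing-free sets `F` of `∫_F S` equals the integral over one period of the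
supremum of `S` over all aliases. -/
theorem iSup_lintegral_aliasing_free_eq (fs : ℝ) (hfs : 0 < fs)
    (S : ℝ → ℝ≥0∞) (hS : Measurable S) :
    (⨆ (F : Set ℝ) (_ : MeasurableSet F) (_ : Bornology.IsBounded F)
        (_ : ∀ n : ℤ, n ≠ 0 → volume (F ∩ ((fun x => x + (n : ℝ) * fs) '' F)) = 0),
        ∫⁻ f in F, S f ∂volume)
      = ∫⁻ f in Set.Ioc (-(fs / 2)) (fs / 2), ⨆ k : ℤ, S (f - fs * k) ∂volume := by
  have hI : Ioc (-(fs / 2)) (fs / 2) = Ioc (-(fs / 2)) (-(fs / 2) + fs) := by ring_nf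
  have hM : ∀ f, ⨆ k : ℤ, S (f - fs * k) = ⨆ n : ℤ, S (f + n * fs) := fun f =>
    (Equiv.neg ℤ).iSup_congr fun k => by simp only [Equiv.neg_apply, Int.cast_neg]; ring_nf
  simp_rw [hI, hM]
  refine le_antisymm ?_ (setLIntegral_Ioc_iSup_le_iSup_isAliasingFree hfs _ hS)
  exact iSup₂_le fun F hFm => iSup₂_le fun _ hF => IsAliasingFree.setLIntegral_le hF hfs _ hFm hS
end

section
/- Let x, y : ℤ → [0, ∞] satisfy 0 < y(k) < ∞ for every k ∈ ℤ. Then the supremum of Σ_{k∈ℤ} x(k)·h(k), taken over all h : ℤ → [0, ∞] with Σ_{k∈ℤ} y(k)·h(k) = 1, equals sup_{k∈ℤ} x(k)/y(k), where sums and arithmetic are in the extended nonnegative reals. -/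
open scoped ENNReal

/-! Writing `x k * h k = (x k / y k) * (y k * h k)` bounds the objective by the largest ratio
times the constraint; conversely, putting all the mass `(y k)⁻¹` on a single index `k` attains
the ratio `x k / y k`. -/

theorem tsum_mul_pi_single {ι α : Type*} [DecidableEq ι] [NonUnitalNonAssocSemiring α]
    [TopologicalSpace α] (f : ι → α) (k : ι) (c : α) :
    ∑' j, f j * (Pi.single k c : ι → α) j = f k * c := by
  rw [tsum_eq_single k fun j hj => by rw [Pi.single_eq_of_ne hj, mul_zero], Pi.single_eq_same]

namespace ENNReal

variable {ι : Type*} {x y : ι → ℝ≥0∞}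

theorem tsum_mul_le_iSup_div_mul_tsum (hy₀ : ∀ k, y k ≠ 0) (hy : ∀ k, y k ≠ ∞) (h : ι → ℝ≥0∞) :
    ∑' k, x k * h k ≤ (⨆ k, x k / y k) * ∑' k, y k * h k := by
  calc ∑' k, x k * h k
      = ∑' k, x k / y k * (y k * h k) := by
        simp only [← mul_assoc, ENNReal.div_mul_cancel (hy₀ _) (hy _)]
    _ ≤ ∑' k, (⨆ j, x j / y j) * (y k * h k) :=
        ENNReal.tsum_le_tsum fun k => mul_le_mul_left (le_iSup (fun j => x j / y j) k) _
    _ = (⨆ k, x k / y k) * ∑' k, y k * h k := ENNReal.tsum_mul_left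

theorem iSup_tsum_mul_eq_iSup_div (hy₀ : ∀ k, y k ≠ 0) (hy : ∀ k, y k ≠ ∞) :
    (⨆ (h : ι → ℝ≥0∞) (_ : ∑' k, y k * h k = 1), ∑' k, x k * h k) = ⨆ k, x k / y k := by
  classical
  refine le_antisymm (iSup₂_le fun h hh => ?_) (iSup_le fun k => ?_)
  · simpa [hh] using tsum_mul_le_iSup_div_mul_tsum hy₀ hy h
  · have hnorm : ∑' j, y j * (Pi.single k (y k)⁻¹ : ι → ℝ≥0∞) j = 1 := by
      rw [tsum_mul_pi_single, ENNReal.mul_inv_cancel (hy₀ k) (hy k)]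
    refine le_iSup₂_of_le (Pi.single k (y k)⁻¹) hnorm ?_
    rw [tsum_mul_pi_single, div_eq_mul_inv]

end ENNReal

/-- The optimization lemma from Appendix B: maximizing `∑ₖ x k * h k` over nonnegative
coefficients `h` normalized by `∑ₖ y k * h k = 1` yields the maximal ratio
`⨆ₖ x k / y k`. -/
theorem iSup_tsum_linear_eq_iSup_ratio (x y : ℤ → ℝ≥0∞)
    (hy : ∀ k : ℤ, 0 < y k ∧ y k < ∞) :
    (⨆ (h : ℤ → ℝ≥0∞) (_ : ∑' k : ℤ, y k * h k = 1), ∑' k : ℤ, x k * h k)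
      = ⨆ k : ℤ, x k / y k :=
  ENNReal.iSup_tsum_mul_eq_iSup_div (fun k => (hy k).1.ne') (fun k => (hy k).2.ne)
end

section
/- Let n ≥ 1, let λ₁, …, λ_n be nonnegative real numbers, let θ > 0, and set R = (1/2)·Σ_{i=1}^n max(log₂(λ_i/θ), 0). Then Σ_{i=1}^n min(λ_i, θ) ≥ 2^{−2R} · Σ_{i=1}^n λ_i. -/
/-!
Writing `rᵢ = max (log₂ (λᵢ / θ)) 0` for the rate spent on the `i`-th eigenvalue, each term of
reverse waterfilling is `min λᵢ θ = λᵢ · 2^(-rᵢ)`. Since all rates are nonnegative,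
`rᵢ ≤ ∑ⱼ rⱼ = 2R`, so every term dominates `2^(-2R) · λᵢ`; sum over `i`.
-/

open Real Finset

lemma min_eq_mul_rpow_neg_max_logb {b x θ : ℝ} (hb : 1 < b) (hx : 0 ≤ x) (hθ : 0 < θ) :
    min x θ = x * b ^ (-max (logb b (x / θ)) 0) := by
  rcases le_or_gt x θ with hxθ | hθx
  · have hlog : logb b (x / θ) ≤ 0 :=
      logb_nonpos hb (div_nonneg hx hθ.le) ((div_le_one hθ).2 hxθ)
    rw [min_eq_left hxθ, max_eq_right hlog, neg_zero, rpow_zero, mul_one]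
  · have hratio : 0 < x / θ := div_pos (hθ.trans hθx) hθ
    have hlog : 0 ≤ logb b (x / θ) := logb_nonneg hb ((one_le_div hθ).2 hθx.le)
    rw [min_eq_right hθx.le, max_eq_left hlog, rpow_neg (by positivity),
      rpow_logb (by positivity) hb.ne' hratio, inv_div, mul_div_cancel₀ θ (hθ.trans hθx).ne']

lemma rpow_neg_sum_max_logb_mul_sum_le_sum_min {ι : Type*} (s : Finset ι) {b θ : ℝ}
    (hb : 1 < b) (hθ : 0 < θ) (l : ι → ℝ) (hl : ∀ i ∈ s, 0 ≤ l i) :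
    b ^ (-∑ i ∈ s, max (logb b (l i / θ)) 0) * ∑ i ∈ s, l i ≤ ∑ i ∈ s, min (l i) θ := by
  rw [mul_sum]
  refine sum_le_sum fun i hi => ?_
  have hrate : max (logb b (l i / θ)) 0 ≤ ∑ j ∈ s, max (logb b (l j / θ)) 0 :=
    single_le_sum (f := fun j => max (logb b (l j / θ)) 0) (fun j _ => le_max_right _ 0) hi
  rw [min_eq_mul_rpow_neg_max_logb hb (hl i hi) hθ, mul_comm]
  exact mul_le_mul_of_nonneg_left (rpow_le_rpow_of_exponent_le hb.le (neg_le_neg hrate)) (hl i hi)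

theorem reverse_waterfilling_ge_flat_general (n : ℕ)
    (l : Fin n → ℝ) (hl : ∀ i, 0 ≤ l i) (θ : ℝ) (hθ : 0 < θ) (R : ℝ)
    (hR : R = (1 / 2) * ∑ i, max (Real.logb 2 (l i / θ)) 0) :
    (∑ i, min (l i) θ) ≥ (2 : ℝ) ^ (-(2 * R)) * ∑ i, l i := by
  have hexponent : -(2 * R) = -∑ i, max (logb 2 (l i / θ)) 0 := by rw [hR]; ring
  rw [hexponent]
  exact rpow_neg_sum_max_logb_mul_sum_le_sum_min univ one_lt_two hθ l fun i _ => hl i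

/-- The eigenvalue inequality (40) from Example 2: reverse waterfilling over the
eigenvalues `l i` at water level `θ` beats the flat exponential rate-distortion
tradeoff at the corresponding rate `R`. -/
theorem reverse_waterfilling_ge_flat (n : ℕ) (hn : 1 ≤ n)
    (l : Fin n → ℝ) (hl : ∀ i, 0 ≤ l i) (θ : ℝ) (hθ : 0 < θ) (R : ℝ)
    (hR : R = (1 / 2) * ∑ i, max (Real.logb 2 (l i / θ)) 0) :
    (∑ i, min (l i) θ) ≥ (2 : ℝ) ^ (-(2 * R)) * ∑ i, l i :=
  reverse_waterfilling_ge_flat_general n l hl θ hθ R hR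
end

section
/- Let S_n be an n×n positive definite complex matrix, let S be an n×n Hermitian complex matrix, and let H be an n×p complex matrix such that the p×p matrix Hᴴ·S_n·H is invertible (Hᴴ denotes conjugate transpose). Then the n×n matrix S·S_n⁻¹·S − S·H·(Hᴴ·S_n·H)⁻¹·Hᴴ·S is positive semidefinite. -/
/-!
With `K = Hᴴ Sₙ H` and `P = H K⁻¹ Hᴴ` one has `P Sₙ P = P`, hence `N = Sₙ⁻¹ - P` satisfies
`N Sₙ N = N`. As `N` is Hermitian this exhibits `N = N Sₙ Nᴴ` as positive semidefinite, and the
matrix of the theorem is `S N Sᴴ`.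
-/

open Matrix
open scoped ComplexOrder

namespace Matrix

variable {m n R : Type*} [Fintype m] [Fintype n]

section CommRing

variable [CommRing R]

theorem mul_inv_mul_mul_mul_inv_mul_eq_self [DecidableEq m] (A : Matrix n n R) (B : Matrix m n R)
    (H : Matrix n m R) (hBAH : IsUnit (B * A * H)) :
    H * (B * A * H)⁻¹ * B * A * (H * (B * A * H)⁻¹ * B) = H * (B * A * H)⁻¹ * B := by
  have hinv : (B * A * H)⁻¹ * (B * A * H) = 1 :=
    nonsing_inv_mul _ ((isUnit_iff_isUnit_det _).mp hBAH)
  calc H * (B * A * H)⁻¹ * B * A * (H * (B * A * H)⁻¹ * B)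
      = H * ((B * A * H)⁻¹ * (B * A * H)) * (B * A * H)⁻¹ * B := by
        simp only [Matrix.mul_assoc]
    _ = H * (B * A * H)⁻¹ * B := by rw [hinv, Matrix.mul_one]

theorem inv_sub_mul_mul_inv_sub_eq_self [DecidableEq n] {A P : Matrix n n R} (hA : IsUnit A)
    (hP : P * A * P = P) : (A⁻¹ - P) * A * (A⁻¹ - P) = A⁻¹ - P := by
  have hAinv : A⁻¹ * A = 1 := nonsing_inv_mul A ((isUnit_iff_isUnit_det A).mp hA)
  have hAinv' : A * A⁻¹ = 1 := mul_nonsing_inv A ((isUnit_iff_isUnit_det A).mp hA)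
  simp only [Matrix.sub_mul, Matrix.mul_sub, hAinv, hP, Matrix.one_mul, Matrix.mul_assoc,
    hAinv', Matrix.mul_one]
  abel

end CommRing

theorem PosSemidef.of_mul_mul_eq_self [Ring R] [PartialOrder R] [StarRing R]
    {A N : Matrix n n R} (hA : A.PosSemidef) (hN : N.IsHermitian) (hNAN : N * A * N = N) :
    N.PosSemidef := by
  simpa only [hN.eq, hNAN] using hA.mul_mul_conjTranspose_same N

end Matrix

/-- The matrix inequality (99) of Appendix A.4: for `S_n` positive definite, `S`
Hermitian, and `H` with `Hᴴ Sₙ H` invertible,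
`S Sₙ⁻¹ S − S H (Hᴴ Sₙ H)⁻¹ Hᴴ S` is positive semidefinite. -/
theorem matrix_filter_bank_inequality {n p : ℕ}
    (Sn : Matrix (Fin n) (Fin n) ℂ) (hSn : Sn.PosDef)
    (S : Matrix (Fin n) (Fin n) ℂ) (hS : S.IsHermitian)
    (H : Matrix (Fin n) (Fin p) ℂ) (hH : IsUnit (Hᴴ * Sn * H)) :
    (S * Sn⁻¹ * S - S * H * (Hᴴ * Sn * H)⁻¹ * Hᴴ * S).PosSemidef := by
  set P := H * (Hᴴ * Sn * H)⁻¹ * Hᴴ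
  have hP : P.IsHermitian :=
    isHermitian_mul_mul_conjTranspose H (isHermitian_conjTranspose_mul_mul H hSn.isHermitian).inv
  have hN : (Sn⁻¹ - P).PosSemidef :=
    hSn.posSemidef.of_mul_mul_eq_self (hSn.inv.isHermitian.sub hP)
      (inv_sub_mul_mul_inv_sub_eq_self hSn.isUnit
        (mul_inv_mul_mul_mul_inv_mul_eq_self Sn Hᴴ H hH))
  have hSNS : S * Sn⁻¹ * S - S * H * (Hᴴ * Sn * H)⁻¹ * Hᴴ * S = S * (Sn⁻¹ - P) * Sᴴ := by
    simp only [hS.eq, P, Matrix.mul_sub, Matrix.sub_mul, Matrix.mul_assoc]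
  rw [hSNS]
  exact hN.mul_mul_conjTranspose_same S
end

section
/- Let S : ℝ → [0, ∞) be a nonnegative Lebesgue-integrable function, let f_s > 0, let F ⊆ ℝ be a measurable set whose Lebesgue measure is at most f_s, and let ε > 0. Then there exist a positive integer P and real numbers a₁, …, a_P such that the half-open intervals I_p = [a_p, a_p + f_s/P), p = 1, …, P, are pairwise disjoint and ∫_{⋃_{p=1}^P I_p} S(f) df ≥ ∫_F S(f) df − ε. -/
/-!
By inner regularity, `F` contains a compact `K` carrying all of `∫_F S` up to `ε`; when
`vol F = fs` one also cuts out a small ball around a point near which `K` has positive measure,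
so that `vol K < fs`. A small closed thickening of `K` then still has measure `< fs`, so for `P`
large the grid cells of length `fs / P` meeting `K` lie inside it and are at most `P` in number.
Padding them with further cells gives the `P` disjoint intervals, which cover `K`.
-/

open MeasureTheory Set Filter Topology Metric Function
open scoped ENNReal

theorem MeasureTheory.Integrable.exists_pos_forall_norm_setIntegral_lt {α E : Type*}
    [MeasurableSpace α] {μ : Measure α} [NormedAddCommGroup E] [NormedSpace ℝ E] {f : α → E}
    (hf : Integrable f μ) {ε : ℝ} (hε : 0 < ε) :
    ∃ δ > 0, ∀ s, μ s < δ → ‖∫ x in s, f x ∂μ‖ < ε := by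
  have h := hf.tendsto_setIntegral_nhds_zero (l := comap μ (𝓝 0)) (s := id) tendsto_comap
  have hsmall := h.eventually (ball_mem_nhds 0 hε)
  simpa only [(ENNReal.nhds_zero_basis.comap μ).eventually_iff, mem_preimage, mem_Iio, id,
    dist_zero_right] using hsmall

theorem exists_measure_sdiff_ball_lt {α : Type*} [PseudoMetricSpace α] [SecondCountableTopology α]
    [MeasurableSpace α] [OpensMeasurableSpace α] {μ : Measure α} {s : Set α} (hs₀ : μ s ≠ 0)
    (hs : μ s ≠ ∞) {r : ℝ} (hr : 0 < r) : ∃ x, μ (s \ ball x r) < μ s := by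
  obtain ⟨x, -, hpos⟩ := exists_mem_forall_mem_nhdsWithin_pos_measure hs₀
  refine ⟨x, ?_⟩
  calc μ (s \ ball x r) < μ (s \ ball x r) + μ (s ∩ ball x r) :=
        ENNReal.lt_add_right (measure_ne_top_of_subset sdiff_subset hs)
          (hpos _ (inter_mem_nhdsWithin s (ball_mem_nhds x hr))).ne'
    _ = μ s := by rw [add_comm, measure_inter_add_sdiff s measurableSet_ball]

theorem MeasurableSet.exists_isCompact_subset_volume_lt {F : Set ℝ} (hF : MeasurableSet F)
    {c : ℝ≥0∞} (hc₀ : c ≠ 0) (hc : c ≠ ∞) (hFc : volume F ≤ c) {δ : ℝ≥0∞} (hδ : δ ≠ 0) :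
    ∃ K ⊆ F, IsCompact K ∧ volume K < c ∧ volume (F \ K) < δ := by
  obtain ⟨K₀, hK₀F, hK₀, hFK₀⟩ :=
    hF.exists_isCompact_sdiff_lt (ne_top_of_le_ne_top hc hFc) (ENNReal.half_pos hδ).ne'
  rcases ((measure_mono hK₀F).trans hFc).lt_or_eq with hlt | heq
  · exact ⟨K₀, hK₀F, hK₀, hlt, hFK₀.trans_le ENNReal.half_le_self⟩
  obtain ⟨r, -, hr₀, hrδ⟩ := ENNReal.lt_iff_exists_real_btwn.mp (ENNReal.half_pos hδ)
  obtain ⟨x, hx⟩ := exists_measure_sdiff_ball_lt (μ := volume) (heq ▸ hc₀) (heq ▸ hc)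
    (half_pos (ENNReal.ofReal_pos.mp hr₀))
  refine ⟨K₀ \ ball x (r / 2), sdiff_subset.trans hK₀F, hK₀.diff isOpen_ball, heq ▸ hx, ?_⟩
  calc volume (F \ (K₀ \ ball x (r / 2)))
      ≤ volume (F \ K₀) + volume (ball x (r / 2)) := by
        rw [sdiff_sdiff_right]
        exact (measure_union_le _ _).trans (by gcongr; exact inter_subset_right)
    _ < δ / 2 + δ / 2 := by
        rw [Real.volume_ball, mul_div_cancel₀ r two_ne_zero]
        exact ENNReal.add_lt_add hFK₀ hrδ
    _ = δ := ENNReal.add_halves δ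

theorem pairwise_disjoint_Ico_zsmul_add {α : Type*} [AddCommGroup α] [PartialOrder α]
    [IsOrderedAddMonoid α] (b : α) :
    Pairwise (Disjoint on fun n : ℤ => Ico (n • b) (n • b + b)) := by
  simpa only [add_one_zsmul] using pairwise_disjoint_Ico_zsmul b

theorem mem_Ico_floor_div_zsmul {L : ℝ} (hL : 0 < L) (x : ℝ) :
    x ∈ Ico (⌊x / L⌋ • L) (⌊x / L⌋ • L + L) := by
  rw [zsmul_eq_mul]
  constructor
  · exact (le_div_iff₀ hL).mp (Int.floor_le _)
  · linarith [(div_lt_iff₀ hL).mp (Int.lt_floor_add_one (x / L))]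

theorem Bornology.IsBounded.exists_finset_Ico_zsmul_cover {K : Set ℝ} (hK : IsBounded K)
    {L : ℝ} (hL : 0 < L) :
    ∃ T : Finset ℤ, K ⊆ ⋃ n ∈ T, Ico (n • L) (n • L + L) ∧
      T.card * ENNReal.ofReal L ≤ volume (Metric.cthickening L K) := by
  have hmono : Monotone fun x : ℝ => ⌊x / L⌋ := fun x y hxy =>
    Int.floor_mono (div_le_div_of_nonneg_right hxy hL.le)
  have hfin := (hmono.map_bddBelow hK.bddBelow).finite_of_bddAbove (hmono.map_bddAbove hK.bddAbove)
  refine ⟨hfin.toFinset, fun x hx => mem_biUnion (by simpa using ⟨x, hx, rfl⟩)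
    (mem_Ico_floor_div_zsmul hL x), ?_⟩
  have hcell : ∀ n ∈ hfin.toFinset, Ico (n • L) (n • L + L) ⊆ Metric.cthickening L K := by
    intro n hn z hz
    obtain ⟨y, hyK, rfl⟩ := hfin.mem_toFinset.mp hn
    have hy := mem_Ico_floor_div_zsmul hL y
    refine mem_cthickening_of_dist_le z y L K hyK ?_
    rw [Real.dist_eq, abs_le]
    constructor <;> linarith [hz.1, hz.2, hy.1, hy.2]
  calc hfin.toFinset.card * ENNReal.ofReal L
      = volume (⋃ n ∈ hfin.toFinset, Ico (n • L) (n • L + L)) := by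
        rw [measure_biUnion_finset (fun m _ n _ hmn => pairwise_disjoint_Ico_zsmul_add L hmn)
          fun n _ => measurableSet_Ico]
        simp [Real.volume_Ico]
    _ ≤ volume (Metric.cthickening L K) := measure_mono (iUnion₂_subset hcell)

theorem IsCompact.exists_pairwise_disjoint_Ico_cover {K : Set ℝ} (hK : IsCompact K) {c : ℝ}
    (hKc : volume K < ENNReal.ofReal c) :
    ∃ P : ℕ, 0 < P ∧ ∃ a : Fin P → ℝ,
      Pairwise (Disjoint on fun p => Ico (a p) (a p + c / P)) ∧
        K ⊆ ⋃ p, Ico (a p) (a p + c / P) := by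
  have hc : 0 < c := ENNReal.ofReal_pos.mp (pos_of_gt hKc)
  have hsmall : ∀ᶠ r in 𝓝[>] (0 : ℝ), volume (cthickening r K) < ENNReal.ofReal c :=
    ((tendsto_measure_cthickening_of_isCompact hK).eventually (gt_mem_nhds hKc)).filter_mono
      nhdsWithin_le_nhds
  obtain ⟨r, hrK, hr⟩ := (hsmall.and self_mem_nhdsWithin).exists
  obtain ⟨P, hP⟩ := exists_nat_gt (c / r)
  have hP₀ : (0 : ℝ) < P := (div_pos hc hr).trans hP
  set L := c / P
  have hL : 0 < L := div_pos hc hP₀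
  obtain ⟨T, hKT, hTvol⟩ := hK.isBounded.exists_finset_Ico_zsmul_cover hL
  -- the cells indexed by `T` are disjoint and lie in a thickening of measure `< c = P * L`
  have hTP : T.card ≤ P := by
    have hLr : L ≤ r := (div_le_iff₀ hP₀).mpr (by linarith [(div_lt_iff₀ hr).mp hP])
    have hPL : ENNReal.ofReal c = P * ENNReal.ofReal L := by
      rw [← ENNReal.ofReal_natCast, ← ENNReal.ofReal_mul hP₀.le, mul_div_cancel₀ c hP₀.ne']
    have := ((hTvol.trans (measure_mono (cthickening_mono hLr K))).trans_lt hrK).trans_eq hPL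
    exact_mod_cast (ENNReal.mul_lt_mul_iff_left (ENNReal.ofReal_pos.mpr hL).ne'
      ENNReal.ofReal_ne_top).mp this |>.le
  obtain ⟨t, hTt, ht⟩ := Infinite.exists_superset_card_eq T P hTP
  refine ⟨P, by exact_mod_cast hP₀, fun p => t.orderEmbOfFin ht p • L,
    fun p q hpq => pairwise_disjoint_Ico_zsmul_add L ((t.orderEmbOfFin ht).injective.ne hpq), ?_⟩
  refine hKT.trans (iUnion₂_subset fun n hn => ?_)
  obtain ⟨p, hp⟩ : n ∈ range (t.orderEmbOfFin ht) := by
    rw [Finset.range_orderEmbOfFin]; exact hTt hn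
  exact subset_iUnion_of_subset p (by simp only [hp]; rfl)

/-- The covering claim underlying Theorems 10 and 12: any measurable set `F` of Lebesgue
measure at most `fs` carrying spectral mass `∫_F S` can be approximated, up to `ε`, by
the union of `P` pairwise disjoint intervals of length `fs / P` (the supports of `P`
ideal band-pass pre-sampling filters). -/
theorem exists_intervals_approximating_spectral_mass
    (S : ℝ → ℝ) (hS0 : ∀ f, 0 ≤ S f) (hSint : Integrable S volume)
    (fs : ℝ) (hfs : 0 < fs)
    (F : Set ℝ) (hF : MeasurableSet F) (hFvol : volume F ≤ ENNReal.ofReal fs)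
    (ε : ℝ) (hε : 0 < ε) :
    ∃ (P : ℕ) (_ : 0 < P) (a : Fin P → ℝ),
      (∀ p q : Fin P, p ≠ q →
          Disjoint (Set.Ico (a p) (a p + fs / P)) (Set.Ico (a q) (a q + fs / P))) ∧
      (∫ f in ⋃ p : Fin P, Set.Ico (a p) (a p + fs / P), S f ∂volume)
        ≥ (∫ f in F, S f ∂volume) - ε := by
  obtain ⟨δ, hδ, hSδ⟩ := hSint.exists_pos_forall_norm_setIntegral_lt hε
  obtain ⟨K, hKF, hK, hKfs, hFK⟩ := hF.exists_isCompact_subset_volume_lt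
    (ENNReal.ofReal_pos.mpr hfs).ne' ENNReal.ofReal_ne_top hFvol hδ.ne'
  obtain ⟨P, hP, a, hdisj, hKa⟩ := hK.exists_pairwise_disjoint_Ico_cover hKfs
  refine ⟨P, hP, a, fun p q hpq => hdisj hpq, ?_⟩
  rw [ge_iff_le]
  calc (∫ f in F, S f) - ε
      ≤ (∫ f in F, S f) - ∫ f in F \ K, S f := by
        gcongr
        exact (le_abs_self _).trans (hSδ _ hFK).le
    _ = ∫ f in K, S f := by
        rw [setIntegral_sdiff hK.measurableSet hSint.integrableOn hKF]; ring
    _ ≤ ∫ f in ⋃ p, Ico (a p) (a p + fs / P), S f :=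
        setIntegral_mono_set hSint.integrableOn (.of_forall hS0) hKa.eventuallyLE
end

section
/- Let M ≥ 1 and let S₁, …, S_M : ℝ → [0, ∞) be measurable functions, each integrable on [−1/2, 1/2]. Let θ > 0 and θ₁, …, θ_M > 0 be such that for every m = 1, …, M, ∫_{−1/2}^{1/2} max(log(S_m(φ)/θ_m), 0) dφ = ∫_{−1/2}^{1/2} max(log((Σ_{j=1}^M S_j(φ))/θ), 0) dφ, and these integrals are finite. Then Σ_{m=1}^M ∫_{−1/2}^{1/2} min(S_m(φ), θ_m) dφ ≤ ∫_{−1/2}^{1/2} min(Σ_{m=1}^M S_m(φ), θ) dφ. -/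
/-!
Write `log⁺` for the positive part of the logarithm. For `s ≥ 0` and `t > 0`, the reverse
waterfilling distortion is `min s t = s * exp (-log⁺ (s / t))`, and the convex function
`ℓ ↦ s * exp (-ℓ) + t * ℓ` is minimised on `ℓ ≥ 0` at the rate `ℓ = log⁺ (s / t)`. Evaluating it
at the joint rate density `ℓ = log⁺ (∑ j, S j / θ)` therefore bounds each component's distortion
by `∫ S m * exp (-ℓ)` up to `θm m` times the difference of the two rates, which vanishes
after integration. Summing over `m` gives `∫ (∑ j, S j) * exp (-ℓ) = ∫ min (∑ j, S j) θ`.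
-/

open MeasureTheory Real

theorem min_eq_mul_exp_neg_posLog {s t : ℝ} (hs : 0 ≤ s) (ht : 0 < t) :
    min s t = s * exp (-log⁺ (s / t)) := by
  rcases le_or_gt s t with hst | hts
  · have hratio : |s / t| ≤ 1 := by
      rw [abs_of_nonneg (by positivity)]
      exact div_le_one_of_le₀ hst ht.le
    rw [min_eq_left hst, (posLog_eq_zero_iff _).2 hratio, neg_zero, exp_zero, mul_one]
  · have hs_ne : s ≠ 0 := (ht.trans hts).ne'
    have hratio : 1 ≤ |s / t| := by
      rw [abs_of_nonneg (by positivity)]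
      exact (one_le_div ht).2 hts.le
    rw [min_eq_right hts.le, posLog_eq_log hratio, exp_neg, exp_log (div_pos (ht.trans hts) ht)]
    field_simp

theorem min_le_mul_exp_neg_add {s t ℓ : ℝ} (hs : 0 ≤ s) (ht : 0 < t) (hℓ : 0 ≤ ℓ) :
    min s t ≤ s * exp (-ℓ) + t * (ℓ - log⁺ (s / t)) := by
  set L := log⁺ (s / t)
  have hmin : min s t = s * exp (-L) := min_eq_mul_exp_neg_posLog hs ht
  have htangent : s * exp (-L) * (1 + (L - ℓ)) ≤ s * exp (-ℓ) := by
    rw [show -ℓ = -L + (L - ℓ) by ring, exp_add, mul_assoc]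
    gcongr
    linarith [add_one_le_exp (L - ℓ)]
  have hslack : 0 ≤ (ℓ - L) * (t - min s t) := by
    rcases le_or_gt L ℓ with hLℓ | hℓL
    · exact mul_nonneg (sub_nonneg.2 hLℓ) (sub_nonneg.2 (min_le_right s t))
    · have hts : t ≤ s := by
        by_contra! hst
        have hratio : |s / t| ≤ 1 := by
          rw [abs_of_nonneg (by positivity)]
          exact div_le_one_of_le₀ hst.le ht.le
        linarith [(posLog_eq_zero_iff _).2 hratio]
      rw [min_eq_right hts, sub_self, mul_zero]
  rw [hmin] at hslack ⊢
  nlinarith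

section Integral

variable {α : Type*} [MeasurableSpace α] {μ : Measure α}

theorem MeasureTheory.Integrable.mul_exp_neg {f ℓ : α → ℝ} (hf : Integrable f μ)
    (hℓ : AEStronglyMeasurable ℓ μ) (hℓ0 : ∀ x, 0 ≤ ℓ x) :
    Integrable (fun x => f x * exp (-ℓ x)) μ :=
  hf.mul_bdd (continuous_exp.comp_aestronglyMeasurable hℓ.neg)
    (ae_of_all _ fun x => by
      rw [norm_of_nonneg (exp_nonneg _)]
      exact exp_le_one_iff.2 (neg_nonpos.2 (hℓ0 x)))

theorem integral_min_le_integral_mul_exp_neg {s ℓ : α → ℝ} {t : ℝ}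
    (hs0 : ∀ x, 0 ≤ s x) (hs : Integrable s μ) (ht : 0 < t)
    (hℓ0 : ∀ x, 0 ≤ ℓ x) (hℓ : Integrable ℓ μ)
    (hlog : Integrable (fun x => log⁺ (s x / t)) μ)
    (hrate : ∫ x, log⁺ (s x / t) ∂μ = ∫ x, ℓ x ∂μ) :
    ∫ x, min (s x) t ∂μ ≤ ∫ x, s x * exp (-ℓ x) ∂μ := by
  have hmin : Integrable (fun x => min (s x) t) μ :=
    hs.mono (hs.aestronglyMeasurable.inf aestronglyMeasurable_const)
      (ae_of_all _ fun x => by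
        rw [norm_of_nonneg (le_min (hs0 x) ht.le), norm_of_nonneg (hs0 x)]
        exact min_le_left _ _)
  have hexp : Integrable (fun x => s x * exp (-ℓ x)) μ :=
    hs.mul_exp_neg hℓ.aestronglyMeasurable hℓ0
  have hgap : Integrable (fun x => t * (ℓ x - log⁺ (s x / t))) μ :=
    (hℓ.sub hlog).const_mul t
  calc ∫ x, min (s x) t ∂μ
      ≤ ∫ x, s x * exp (-ℓ x) + t * (ℓ x - log⁺ (s x / t)) ∂μ :=
        integral_mono hmin (hexp.add hgap) fun x => min_le_mul_exp_neg_add (hs0 x) ht (hℓ0 x)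
    _ = ∫ x, s x * exp (-ℓ x) ∂μ := by
        rw [integral_add hexp hgap, integral_const_mul, integral_sub hℓ hlog, hrate, sub_self,
          mul_zero, add_zero]

end Integral

theorem sum_waterfilling_le_joint_waterfilling_general
    (M : ℕ)
    (S : Fin M → ℝ → ℝ) (hS0 : ∀ m f, 0 ≤ S m f)
    (hSint : ∀ m, IntegrableOn (S m) (Set.Icc (-(1 / 2) : ℝ) (1 / 2)) volume)
    (θ : ℝ) (hθ : 0 < θ) (θm : Fin M → ℝ) (hθm : ∀ m, 0 < θm m)
    (hintm : ∀ m, IntegrableOn (fun φ => max (Real.log (S m φ / θm m)) 0)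
      (Set.Icc (-(1 / 2) : ℝ) (1 / 2)) volume)
    (hintsum : IntegrableOn (fun φ => max (Real.log ((∑ j, S j φ) / θ)) 0)
      (Set.Icc (-(1 / 2) : ℝ) (1 / 2)) volume)
    (hrate : ∀ m, ∫ φ in Set.Icc (-(1 / 2) : ℝ) (1 / 2), max (Real.log (S m φ / θm m)) 0
      = ∫ φ in Set.Icc (-(1 / 2) : ℝ) (1 / 2), max (Real.log ((∑ j, S j φ) / θ)) 0) :
    (∑ m, ∫ φ in Set.Icc (-(1 / 2) : ℝ) (1 / 2), min (S m φ) (θm m))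
      ≤ ∫ φ in Set.Icc (-(1 / 2) : ℝ) (1 / 2), min (∑ m, S m φ) θ := by
  simp_rw [max_comm _ (0 : ℝ), ← posLog_apply] at hintm hintsum hrate
  set I := Set.Icc (-(1 / 2) : ℝ) (1 / 2)
  set L := fun φ => log⁺ ((∑ j, S j φ) / θ) with hL
  have hL0 : ∀ φ, 0 ≤ L φ := fun φ => posLog_nonneg
  calc (∑ m, ∫ φ in I, min (S m φ) (θm m))
      ≤ ∑ m, ∫ φ in I, S m φ * exp (-L φ) :=
        Finset.sum_le_sum fun m _ => integral_min_le_integral_mul_exp_neg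
          (hS0 m) (hSint m) (hθm m) hL0 hintsum (hintm m) (hrate m)
    _ = ∫ φ in I, (∑ m, S m φ) * exp (-L φ) := by
        rw [← integral_finsetSum _ fun m _ =>
          (hSint m).mul_exp_neg hintsum.aestronglyMeasurable hL0]
        simp_rw [Finset.sum_mul]
    _ = ∫ φ in I, min (∑ m, S m φ) θ := by
        simp_rw [hL, min_eq_mul_exp_neg_posLog (Finset.sum_nonneg fun m _ => hS0 m _) hθ]

/-- The integral inequality of Example 3: if the per-component water levels `θm` and the
joint water level `θ` correspond to the same rate under reverse waterfilling, then the
sum of the per-component waterfilling distortions is at most the joint one. -/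
theorem sum_waterfilling_le_joint_waterfilling
    (M : ℕ) (hM : 1 ≤ M)
    (S : Fin M → ℝ → ℝ) (hS0 : ∀ m f, 0 ≤ S m f)
    (hSmeas : ∀ m, Measurable (S m))
    (hSint : ∀ m, IntegrableOn (S m) (Set.Icc (-(1 / 2) : ℝ) (1 / 2)) volume)
    (θ : ℝ) (hθ : 0 < θ) (θm : Fin M → ℝ) (hθm : ∀ m, 0 < θm m)
    (hintm : ∀ m, IntegrableOn (fun φ => max (Real.log (S m φ / θm m)) 0)
      (Set.Icc (-(1 / 2) : ℝ) (1 / 2)) volume)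
    (hintsum : IntegrableOn (fun φ => max (Real.log ((∑ j, S j φ) / θ)) 0)
      (Set.Icc (-(1 / 2) : ℝ) (1 / 2)) volume)
    (hrate : ∀ m, ∫ φ in Set.Icc (-(1 / 2) : ℝ) (1 / 2), max (Real.log (S m φ / θm m)) 0
      = ∫ φ in Set.Icc (-(1 / 2) : ℝ) (1 / 2), max (Real.log ((∑ j, S j φ) / θ)) 0) :
    (∑ m, ∫ φ in Set.Icc (-(1 / 2) : ℝ) (1 / 2), min (S m φ) (θm m))
      ≤ ∫ φ in Set.Icc (-(1 / 2) : ℝ) (1 / 2), min (∑ m, S m φ) θ :=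
  sum_waterfilling_le_joint_waterfilling_general M S hS0 hSint θ hθ θm hθm hintm hintsum hrate
end
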